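/- arXiv:0904.3653 — 4 statements merged into one kernel-verified Lean document; each statement's English description precedes it below -/
import Mathlib

section
/- Let f : [0,∞) → [0,1] be measurable, let k ≥ 1 be a real number, let A ∈ ℝ, and let m ≥ 0, n > 0. Suppose that for every i ≥ m there exists t(i) ∈ [1,k] with (1/t(i))∫_i^{i+t(i)} f(s) ds ≥ A. Then (1/n)∫_m^{m+n} f(s) ds ≥ A − k/n. -/
open MeasureTheory

private lemma stmt4_integ (f : ℝ → ℝ) (hf : Measurable f)
    (hf01 : ∀ s, 0 ≤ s → f s ∈ Set.Icc (0:ℝ) 1)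
    {a b : ℝ} (ha : 0 ≤ a) (hab : a ≤ b) : IntervalIntegrable f volume a b := by
  rw [intervalIntegrable_iff_integrableOn_Ioc_of_le hab]
  apply Integrable.mono' (integrable_const (1:ℝ)) hf.aestronglyMeasurable.restrict
  filter_upwards [ae_restrict_mem measurableSet_Ioc] with s hs
  have h2 := hf01 s (le_trans ha hs.1.le)
  rw [Real.norm_eq_abs, abs_le]
  exact ⟨by linarith [h2.1], h2.2⟩

theorem stmt4 (f : ℝ → ℝ) (hf : Measurable f)
    (hf01 : ∀ s, 0 ≤ s → f s ∈ Set.Icc (0:ℝ) 1)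
    (k A m n : ℝ) (hk : 1 ≤ k) (hm : 0 ≤ m) (hn : 0 < n)
    (h : ∀ i : ℝ, m ≤ i → ∃ t ∈ Set.Icc (1:ℝ) k,
        A ≤ (1/t) * ∫ s in i..(i+t), f s) :
    A - k/n ≤ (1/n) * ∫ s in m..(m+n), f s := by
  classical
  have hT : ∀ i, m ≤ i → ∃ t, 1 ≤ t ∧ t ≤ k ∧ A * t ≤ ∫ s in i..(i+t), f s := by
    intro i hi
    obtain ⟨t, ⟨ht1, htk⟩, hA⟩ := h i hi
    have ht0 : (0:ℝ) < t := lt_of_lt_of_le one_pos ht1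
    refine ⟨t, ht1, htk, ?_⟩
    have h2 := mul_le_mul_of_nonneg_left hA (le_of_lt ht0)
    have h3 : t * ((1/t) * ∫ s in i..(i+t), f s) = ∫ s in i..(i+t), f s := by
      field_simp
    linarith
  set T : ℝ → ℝ := fun i => if hi : m ≤ i then (hT i hi).choose else 1 with hTdef
  have hTprop : ∀ i, m ≤ i →
      1 ≤ T i ∧ T i ≤ k ∧ A * T i ≤ ∫ s in i..(i + T i), f s := by
    intro i hi
    simp only [hTdef, dif_pos hi]
    exact (hT i hi).choose_spec
  set x : ℕ → ℝ := fun j => Nat.rec m (fun _ y => y + T y) j with hxdef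
  have hxsucc : ∀ j, x (j+1) = x j + T (x j) := fun j => rfl
  have hxge : ∀ j : ℕ, m + j ≤ x j := by
    intro j
    induction j with
    | zero => have hx0 : x 0 = m := rfl; simp [hx0]
    | succ j ih =>
      have hmx : m ≤ x j := by
        have : (0:ℝ) ≤ j := Nat.cast_nonneg j
        linarith
      have h1 := (hTprop (x j) hmx).1
      rw [hxsucc]
      push_cast
      linarith
  have hmx : ∀ j, m ≤ x j := by
    intro j
    have : (0:ℝ) ≤ j := Nat.cast_nonneg j
    linarith [hxge j]
  have exN : ∃ j : ℕ, m + n ≤ x j := by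
    refine ⟨⌈n⌉₊, ?_⟩
    have := hxge ⌈n⌉₊
    have h2 : n ≤ (⌈n⌉₊ : ℝ) := Nat.le_ceil n
    linarith
  set N := Nat.find exN with hNdef
  have hNspec : m + n ≤ x N := Nat.find_spec exN
  -- x N ≤ m + n + k
  have hxNk : x N ≤ m + n + k := by
    rcases Nat.eq_zero_or_pos N with h0 | hNpos
    · exfalso
      rw [h0] at hNspec
      have hx0 : x 0 = m := rfl
      rw [hx0] at hNspec
      linarith
    · obtain ⟨j, hj⟩ := Nat.exists_eq_succ_of_ne_zero (Nat.pos_iff_ne_zero.mp hNpos)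
      have hjlt : j < N := by omega
      have hnotP : ¬ (m + n ≤ x j) := Nat.find_min exN hjlt
      push_neg at hnotP
      have hk2 := (hTprop (x j) (hmx j)).2.1
      rw [hj, hxsucc]
      linarith
  -- lower bound on integral up to x N
  have hsum : ∀ j : ℕ, A * (x j - m) ≤ ∫ s in m..(x j), f s := by
    intro j
    induction j with
    | zero => simp [hxdef]
    | succ j ih =>
      have hwin := (hTprop (x j) (hmx j)).2.2
      have ht1 := (hTprop (x j) (hmx j)).1
      have hadd : (∫ s in m..(x j), f s) + (∫ s in (x j)..(x (j+1)), f s)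
          = ∫ s in m..(x (j+1)), f s := by
        apply intervalIntegral.integral_add_adjacent_intervals
        · exact stmt4_integ f hf hf01 hm (hmx j)
        · exact stmt4_integ f hf hf01 (le_trans hm (hmx j)) (by rw [hxsucc]; linarith)
      rw [← hadd, hxsucc]
      have : (∫ s in (x j)..(x j + T (x j)), f s) ≥ A * T (x j) := hwin
      have hrw : x j + T (x j) = x (j+1) := (hxsucc j).symm
      rw [hrw] at this ⊢
      rw [hxsucc] at this ⊢
      linarith
  -- split integral
  have hadd2 : (∫ s in m..(m+n), f s) + (∫ s in (m+n)..(x N), f s)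
      = ∫ s in m..(x N), f s := by
    apply intervalIntegral.integral_add_adjacent_intervals
    · exact stmt4_integ f hf hf01 hm (by linarith)
    · exact stmt4_integ f hf hf01 (by linarith) hNspec
  -- upper bound on the tail
  have htail : (∫ s in (m+n)..(x N), f s) ≤ x N - (m+n) := by
    have h1 : (∫ s in (m+n)..(x N), f s) ≤ ∫ s in (m+n)..(x N), (1:ℝ) := by
      apply intervalIntegral.integral_mono_on hNspec
        (stmt4_integ f hf hf01 (by linarith) hNspec) intervalIntegrable_const
      intro s hs
      exact (hf01 s (by linarith [hs.1])).2
    simpa using h1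
  have hpos : 0 ≤ ∫ s in m..(m+n), f s := by
    apply intervalIntegral.integral_nonneg (by linarith)
    intro u hu
    exact (hf01 u (le_trans hm hu.1)).1
  by_cases hA : A ≤ k / n
  · have h1 : A - k/n ≤ 0 := by linarith
    have h2 : 0 ≤ (1/n) * ∫ s in m..(m+n), f s :=
      mul_nonneg (by positivity) hpos
    linarith
  · push_neg at hA
    have hkn : 0 < k / n := div_pos (by linarith) hn
    have hA0 : 0 < A := lt_trans hkn hA
    have hL : n ≤ x N - m := by linarith
    have hAL : A * n ≤ A * (x N - m) :=
      mul_le_mul_of_nonneg_left hL (le_of_lt hA0)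
    have key : A * n - k ≤ ∫ s in m..(m+n), f s := by
      have := hsum N
      linarith
    rw [show (1/n) * ∫ s in m..(m+n), f s = (∫ s in m..(m+n), f s) / n by ring,
        le_div_iff₀ hn]
    have hne : n ≠ 0 := ne_of_gt hn
    have : (A - k/n) * n = A * n - k := by field_simp
    linarith
end

section
/- Let x : [0,∞) → ℝ be continuously differentiable with x(0) = 0, x'(0) = 0, x' nonnegative and nondecreasing. Then for every T > 0, the Lebesgue measure of {t ∈ [0,T] : 1 ≤ x(t) ≤ 2} is at most the Lebesgue measure of {t ∈ [0,T] : 0 ≤ x(t) < 1}. Consequently (1/T)·meas{t ∈ [0,T] : x(t) ∉ [1,2]} ≥ 1/2. -/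
/-!
Since `x'` is nondecreasing, `x` is convex with `x 0 = 0`, so `x t / t` is nondecreasing. If `a` is
the first time `x` reaches `1`, then `x t / t ≥ 1 / a` for `t ≥ a`, so `x t ≤ 2` forces `t ≤ 2 a`:
the time spent in `[1, 2]` is at most `a`, the time spent in `[0, 1)` before `a`.
-/

open MeasureTheory Set

theorem ConvexOn.le_mul_of_map_zero {s : Set ℝ} {f : ℝ → ℝ} (hf : ConvexOn ℝ s f) (h0 : 0 ∈ s)
    (hf0 : f 0 = 0) {a t c k : ℝ} (ha : 0 < a) (has : a ∈ s) (hts : t ∈ s) (hat : a ≤ t)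
    (hc : 0 < c) (hfa : c ≤ f a) (hft : f t ≤ k * c) : t ≤ k * a := by
  have hslope : f a / a ≤ f t / t := by
    simpa [hf0] using hf.secant_mono h0 has hts ha.ne' (ha.trans_le hat).ne' hat
  rw [div_le_div_iff₀ ha (ha.trans_le hat)] at hslope
  nlinarith

theorem measure_div_two_le_of_le {α : Type*} [MeasurableSpace α] {μ : Measure α} {s : Set α}
    {p : α → Prop} (h : μ {t ∈ s | p t} ≤ μ {t ∈ s | ¬ p t}) : μ s / 2 ≤ μ {t ∈ s | ¬ p t} := by
  refine ENNReal.div_le_of_le_mul' ?_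
  calc μ s ≤ μ ({t ∈ s | p t} ∪ {t ∈ s | ¬ p t}) := measure_mono fun t ht => by
          by_cases hp : p t
          · exact Or.inl ⟨ht, hp⟩
          · exact Or.inr ⟨ht, hp⟩
    _ ≤ μ {t ∈ s | p t} + μ {t ∈ s | ¬ p t} := measure_union_le _ _
    _ ≤ 2 * μ {t ∈ s | ¬ p t} := by rw [two_mul]; gcongr

theorem volume_setOf_mem_Icc_le_of_convexOn {f : ℝ → ℝ} {T c : ℝ} (k : ℝ)
    (hconv : ConvexOn ℝ (Icc 0 T) f) (hcont : ContinuousOn f (Icc 0 T))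
    (hnonneg : ∀ t ∈ Icc 0 T, 0 ≤ f t) (hf0 : f 0 = 0) (hc : 0 < c) :
    volume {t ∈ Icc 0 T | f t ∈ Icc c (k * c)}
      ≤ ENNReal.ofReal (k - 1) * volume {t ∈ Icc 0 T | f t ∈ Ico 0 c} := by
  set S := {t ∈ Icc 0 T | c ≤ f t}
  rcases S.eq_empty_or_nonempty with hS | hS
  · refine (measure_mono_null (fun t ht => ?_) measure_empty).trans_le zero_le
    exact hS.subset ⟨ht.1, ht.2.1⟩
  have hbdd : BddBelow S := ⟨0, fun t ht => ht.1.1⟩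
  have haS : sInf S ∈ S :=
    (hcont.preimage_isClosed_of_isClosed isClosed_Icc isClosed_Ici).csInf_mem hS hbdd
  set a := sInf S
  have ha : 0 < a := haS.1.1.lt_of_ne (by rintro h; linarith [haS.2, h ▸ hf0])
  have h0 : (0 : ℝ) ∈ Icc 0 T := ⟨le_rfl, haS.1.1.trans haS.1.2⟩
  calc volume {t ∈ Icc 0 T | f t ∈ Icc c (k * c)} ≤ volume (Icc a (k * a)) := by
        refine measure_mono fun t ⟨ht, hft⟩ => ?_
        have hat : a ≤ t := csInf_le hbdd ⟨ht, hft.1⟩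
        exact ⟨hat, hconv.le_mul_of_map_zero h0 hf0 ha haS.1 ht hat hc haS.2 hft.2⟩
    _ = ENNReal.ofReal (k - 1) * volume (Ico 0 a) := by
        rw [Real.volume_Icc, Real.volume_Ico, ← ENNReal.ofReal_mul' (by linarith)]
        ring_nf
    _ ≤ ENNReal.ofReal (k - 1) * volume {t ∈ Icc 0 T | f t ∈ Ico 0 c} := by
        refine mul_le_mul_right (measure_mono fun t ht => ?_) _
        have htT : t ∈ Icc 0 T := ⟨ht.1, ht.2.le.trans haS.1.2⟩
        exact ⟨htT, hnonneg t htT, lt_of_not_ge fun hct => (csInf_le hbdd ⟨htT, hct⟩).not_gt ht.2⟩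

theorem stmt12_general (x : ℝ → ℝ) (hx : ContDiff ℝ 1 x)
    (hx0 : x 0 = 0)
    (hpos : ∀ t, 0 ≤ t → 0 ≤ deriv x t)
    (hmono : MonotoneOn (deriv x) (Set.Ici 0))
    (T : ℝ) :
    volume {t ∈ Set.Icc 0 T | x t ∈ Set.Icc (1:ℝ) 2}
        ≤ volume {t ∈ Set.Icc 0 T | x t ∈ Set.Ico (0:ℝ) 1} ∧
    ENNReal.ofReal (T/2) ≤ volume {t ∈ Set.Icc 0 T | x t ∉ Set.Icc (1:ℝ) 2} := by
  have hdiff : Differentiable ℝ x := hx.differentiable one_ne_zero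
  have hxmono : MonotoneOn x (Ici 0) :=
    monotoneOn_of_deriv_nonneg (convex_Ici 0) hdiff.continuous.continuousOn
      hdiff.differentiableOn fun t ht => hpos t (interior_subset ht)
  have hconv : ConvexOn ℝ (Ici 0) x :=
    (hmono.mono interior_subset).convexOn_of_deriv (convex_Ici 0) hdiff.continuous.continuousOn
      hdiff.differentiableOn
  have hAB : volume {t ∈ Icc 0 T | x t ∈ Icc (1:ℝ) 2}
      ≤ volume {t ∈ Icc 0 T | x t ∈ Ico (0:ℝ) 1} := by
    simpa [show (2 : ℝ) - 1 = 1 by norm_num] using volume_setOf_mem_Icc_le_of_convexOn 2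
      (hconv.subset Icc_subset_Ici_self (convex_Icc 0 T)) hdiff.continuous.continuousOn
      (fun t ht => hx0 ▸ hxmono self_mem_Ici ht.1 ht.1) hx0 one_pos
  refine ⟨hAB, ?_⟩
  calc ENNReal.ofReal (T / 2) = volume (Icc 0 T) / 2 := by
        rw [Real.volume_Icc, sub_zero, ENNReal.ofReal_div_of_pos two_pos, ENNReal.ofReal_ofNat]
    _ ≤ _ := measure_div_two_le_of_le <| hAB.trans <| measure_mono fun t ht =>
        ⟨ht.1, fun h => h.1.not_gt ht.2.2⟩

theorem stmt12 (x : ℝ → ℝ) (hx : ContDiff ℝ 1 x)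
    (hx0 : x 0 = 0) (hx'0 : deriv x 0 = 0)
    (hpos : ∀ t, 0 ≤ t → 0 ≤ deriv x t)
    (hmono : MonotoneOn (deriv x) (Set.Ici 0))
    (T : ℝ) (hT : 0 < T) :
    volume {t ∈ Set.Icc 0 T | x t ∈ Set.Icc (1:ℝ) 2}
        ≤ volume {t ∈ Set.Icc 0 T | x t ∈ Set.Ico (0:ℝ) 1} ∧
    ENNReal.ofReal (T/2) ≤ volume {t ∈ Set.Icc 0 T | x t ∉ Set.Icc (1:ℝ) 2} :=
  stmt12_general x hx hx0 hpos hmono T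
end

section
/- For a ∈ (0,1], define x_a : [0,∞) → ℝ by x_a(t) = t²/2 for t ≤ a and x_a(t) = a²/2 + a(t−a) for t ≥ a, and set T(a) := a/2 + 2/a (the time at which x_a(T(a)) = 2). Then the Lebesgue measure of {t ∈ [0,T(a)] : 1 ≤ x_a(t) ≤ 2} equals 1/a, and hence (1/T(a))·meas{t ∈ [0,T(a)] : x_a(t) ∉ [1,2]} = 1 − (1/a)/(a/2 + 2/a), which converges to 1/2 as a → 0⁺. -/
open MeasureTheory Filter

theorem stmt13 (x : ℝ → ℝ → ℝ)
    (hx : ∀ a t, x a t = if t ≤ a then t^2/2 else a^2/2 + a*(t-a))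
    (T : ℝ → ℝ) (hT : ∀ a, T a = a/2 + 2/a) :
    (∀ a ∈ Set.Ioc (0:ℝ) 1,
      volume {t ∈ Set.Icc 0 (T a) | x a t ∈ Set.Icc (1:ℝ) 2} = ENNReal.ofReal (1/a) ∧
      (1/(T a)) * (volume {t ∈ Set.Icc 0 (T a) | x a t ∉ Set.Icc (1:ℝ) 2}).toReal
        = 1 - (1/a)/(a/2 + 2/a)) ∧
    Tendsto (fun a : ℝ => 1 - (1/a)/(a/2 + 2/a)) (nhdsWithin 0 (Set.Ioi 0))
      (nhds (1/2)) := by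
  constructor
  · rintro a ⟨ha0, ha1⟩
    have hkey : a * (1/a) = 1 := by field_simp
    have hkey2 : a * (2/a) = 2 := by field_simp
    have hlt : a < a/2 + 1/a := by nlinarith
    have hS1 : {t ∈ Set.Icc 0 (T a) | x a t ∈ Set.Icc (1:ℝ) 2}
        = Set.Icc (a/2 + 1/a) (a/2 + 2/a) := by
      ext t
      simp only [Set.mem_setOf_eq, Set.mem_Icc, hx, hT]
      constructor
      · rintro ⟨⟨ht0, htT⟩, h1, h2⟩
        by_cases h : t ≤ a
        · exfalso
          rw [if_pos h] at h1
          nlinarith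
        · rw [if_neg h] at h1 h2
          push_neg at h
          constructor
          · nlinarith
          · nlinarith
      · rintro ⟨h1, h2⟩
        have htgt : a < t := lt_of_lt_of_le hlt h1
        refine ⟨⟨by nlinarith, by linarith⟩, ?_, ?_⟩
        · rw [if_neg (not_le.mpr htgt)]
          nlinarith [mul_le_mul_of_nonneg_left h1 ha0.le]
        · rw [if_neg (not_le.mpr htgt)]
          nlinarith [mul_le_mul_of_nonneg_left h2 ha0.le]
    have hS2 : {t ∈ Set.Icc 0 (T a) | x a t ∉ Set.Icc (1:ℝ) 2}
        = Set.Ico 0 (a/2 + 1/a) := by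
      have hcompl : ∀ t, t ∈ Set.Icc 0 (T a) →
          (x a t ∈ Set.Icc (1:ℝ) 2 ↔ t ∈ Set.Icc (a/2 + 1/a) (a/2 + 2/a)) := by
        intro t ht
        constructor
        · intro hmem
          have : t ∈ {t ∈ Set.Icc 0 (T a) | x a t ∈ Set.Icc (1:ℝ) 2} := ⟨ht, hmem⟩
          rw [hS1] at this; exact this
        · intro hmem
          have : t ∈ Set.Icc (a/2 + 1/a) (a/2 + 2/a) := hmem
          rw [← hS1] at this; exact this.2
      ext t
      simp only [Set.mem_setOf_eq, Set.mem_Icc, Set.mem_Ico]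
      constructor
      · rintro ⟨⟨ht0, htT⟩, hnot⟩
        refine ⟨ht0, ?_⟩
        by_contra hge
        push_neg at hge
        exact hnot ((hcompl t ⟨ht0, htT⟩).mpr ⟨hge, by rw [hT] at htT; linarith⟩)
      · rintro ⟨ht0, htlt⟩
        have htT : t ≤ T a := by
          rw [hT]
          have h2a : (2:ℝ)/a = 2*(1/a) := by ring
          have : (0:ℝ) < 1/a := by positivity
          linarith
        refine ⟨⟨ht0, htT⟩, ?_⟩
        intro hmem
        have := (hcompl t ⟨ht0, htT⟩).mp hmem
        exact absurd this.1 (not_le.mpr htlt)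
    constructor
    · rw [hS1, Real.volume_Icc]
      congr 1
      ring
    · rw [hS2, Real.volume_Ico]
      have hnn : (0:ℝ) ≤ a/2 + 1/a - 0 := by
        rw [sub_zero]; positivity
      rw [ENNReal.toReal_ofReal hnn]
      rw [hT]
      have hT0 : a/2 + 2/a ≠ 0 := by positivity
      field_simp
      ring
  · have hc : ContinuousAt (fun a : ℝ => 1 - 2/(a^2+4)) 0 := by
      apply ContinuousAt.sub continuousAt_const
      apply ContinuousAt.div continuousAt_const (by fun_prop)
      norm_num
    have h2 : Tendsto (fun a : ℝ => 1 - 2/(a^2+4)) (nhds 0) (nhds (1/2)) := by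
      have := hc.tendsto
      norm_num at this
      convert this using 2
    have heq : (fun a : ℝ => 1 - 2/(a^2+4))
        =ᶠ[nhdsWithin 0 (Set.Ioi 0)] (fun a : ℝ => 1 - (1/a)/(a/2 + 2/a)) := by
      filter_upwards [self_mem_nhdsWithin] with a ha
      have ha0 : a ≠ 0 := ne_of_gt ha
      have : a/2 + 2/a = (a^2 + 4)/(2*a) := by field_simp; ring
      rw [this]
      have h4 : a^2 + 4 ≠ 0 := by positivity
      field_simp
    exact (h2.mono_left nhdsWithin_le_nhds).congr' heq
end

section
/- Let (I, ≤) be a nonempty index set and for each i ∈ I let f_i : [0,∞) → [0,1] be measurable. For m ≥ 0 and t > 0 define V_{m,t} := inf_{i ∈ I} (1/t)∫_m^{m+t} f_i(s) ds, and V_t := V_{0,t}. Then liminf_{t→∞} V_t ≥ sup_{t>0} inf_{m≥0} V_{m,t}. -/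
open MeasureTheory Filter

/-! Fix `t > 0` and let `A` be the infimum of all window averages of length `t` inside `[0, ∞)`.
Cutting `[0, T]` into `⌊T / t⌋` windows of length `t` plus a remainder, on which `f i ≥ 0`, gives
`(1/T) ∫₀ᵀ f i ≥ (1 - t/T) A` for every `i`; letting `T → ∞` yields `A ≤ liminf V_T`. -/

section Window

variable {g : ℝ → ℝ} {a b t x : ℝ}

lemma intervalIntegrable_of_mem_Icc_zero_one (hg : Measurable g)
    (hg01 : ∀ s, 0 ≤ s → g s ∈ Set.Icc (0:ℝ) 1) (ha : 0 ≤ a) (hab : a ≤ b) :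
    IntervalIntegrable g volume a b := by
  refine (intervalIntegrable_const (c := (1:ℝ))).mono_fun' hg.aestronglyMeasurable ?_
  rw [Set.uIoc_of_le hab]
  filter_upwards [ae_restrict_mem measurableSet_Ioc] with s hs
  have h01 := hg01 s (ha.trans hs.1.le)
  rw [Real.norm_eq_abs, abs_le]
  exact ⟨by linarith [h01.1], h01.2⟩

lemma window_average_mem_Icc (hg : Measurable g) (hg01 : ∀ s, 0 ≤ s → g s ∈ Set.Icc (0:ℝ) 1)
    (ht : 0 < t) (ha : 0 ≤ a) : (1/t) * ∫ s in a..(a + t), g s ∈ Set.Icc (0:ℝ) 1 := by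
  have hat : a ≤ a + t := by linarith
  have h0 : 0 ≤ ∫ s in a..(a + t), g s :=
    intervalIntegral.integral_nonneg hat fun s hs => (hg01 s (ha.trans hs.1)).1
  have h1 : ∫ s in a..(a + t), g s ≤ t := by
    simpa using intervalIntegral.integral_mono_on hat
      (intervalIntegrable_of_mem_Icc_zero_one hg hg01 ha hat) intervalIntegrable_const
      fun s hs => (hg01 s (ha.trans hs.1)).2
  rw [one_div]
  exact ⟨by positivity, (inv_mul_le_one₀ ht).2 h1⟩

lemma nat_mul_le_integral_of_le_window
    (hg : ∀ a b, 0 ≤ a → a ≤ b → IntervalIntegrable g volume a b) (ht : 0 ≤ t)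
    (hwin : ∀ m, 0 ≤ m → x ≤ ∫ s in m..(m + t), g s) (n : ℕ) :
    n * x ≤ ∫ s in (0:ℝ)..(n * t), g s := by
  induction n with
  | zero => simp
  | succ n ih =>
    have hnt : 0 ≤ (n : ℝ) * t := by positivity
    rw [Nat.cast_succ, add_one_mul, add_one_mul,
      ← intervalIntegral.integral_add_adjacent_intervals (hg _ _ le_rfl hnt)
        (hg _ _ hnt (le_add_of_nonneg_right ht))]
    linarith [hwin _ hnt]

lemma sub_mul_le_integral_of_le_window (hg0 : ∀ s, 0 ≤ s → 0 ≤ g s)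
    (hg : ∀ a b, 0 ≤ a → a ≤ b → IntervalIntegrable g volume a b) (ht : 0 < t) (hx : 0 ≤ x)
    (hwin : ∀ m, 0 ≤ m → t * x ≤ ∫ s in m..(m + t), g s) (hb : 0 ≤ b) :
    (b - t) * x ≤ ∫ s in (0:ℝ)..b, g s := by
  set n := ⌊b / t⌋₊
  have hnb : n * t ≤ b := by
    have := Nat.floor_le (div_nonneg hb ht.le)
    rwa [le_div_iff₀ ht] at this
  have hbn : b - t ≤ n * t := by
    have := Nat.lt_floor_add_one (b / t)
    rw [div_lt_iff₀ ht] at this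
    linarith
  calc (b - t) * x ≤ n * (t * x) := by rw [← mul_assoc]; exact mul_le_mul_of_nonneg_right hbn hx
    _ ≤ ∫ s in (0:ℝ)..(n * t), g s := nat_mul_le_integral_of_le_window hg ht.le hwin n
    _ ≤ ∫ s in (0:ℝ)..b, g s :=
      intervalIntegral.integral_mono_interval le_rfl (by positivity) hnb
        (by filter_upwards [ae_restrict_mem measurableSet_Ioc] with s hs using hg0 s hs.1.le)
        (hg 0 b le_rfl hb)

end Window

theorem Filter.Tendsto.le_liminf_of_eventuallyLE {α β : Type*} [ConditionallyCompleteLinearOrder α]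
    [TopologicalSpace α] [OrderTopology α] {l : Filter β} [l.NeBot] {u v : β → α} {a : α}
    (hu : Tendsto u l (nhds a)) (huv : u ≤ᶠ[l] v) (hv : IsCoboundedUnder (· ≥ ·) l v) :
    a ≤ liminf v l :=
  hu.liminf_eq ▸ liminf_le_liminf huv hu.isBoundedUnder_ge hv

section Family

variable {I : Type*} {f : I → ℝ → ℝ} {t T : ℝ}

lemma average_mem_Icc (hf : ∀ i, Measurable (f i))
    (hf01 : ∀ i s, 0 ≤ s → f i s ∈ Set.Icc (0:ℝ) 1) (hT : 0 < T) (i : I) :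
    (1/T) * ∫ s in (0:ℝ)..T, f i s ∈ Set.Icc (0:ℝ) 1 := by
  simpa only [zero_add] using window_average_mem_Icc (hf i) (hf01 i) hT le_rfl

lemma iInf_average_le_one [Nonempty I] (hf : ∀ i, Measurable (f i))
    (hf01 : ∀ i s, 0 ≤ s → f i s ∈ Set.Icc (0:ℝ) 1) (hT : 0 < T) :
    ⨅ i, (1/T) * ∫ s in (0:ℝ)..T, f i s ≤ 1 :=
  ciInf_le_of_le ⟨0, Set.forall_mem_range.2 fun i => (average_mem_Icc hf hf01 hT i).1⟩
    (Classical.arbitrary I) (average_mem_Icc hf hf01 hT _).2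

lemma one_sub_div_mul_iInf_window_le [Nonempty I] (hf : ∀ i, Measurable (f i))
    (hf01 : ∀ i s, 0 ≤ s → f i s ∈ Set.Icc (0:ℝ) 1) (ht : 0 < t) (hT : 0 < T) :
    (1 - t/T) * ⨅ m : {m : ℝ // 0 ≤ m}, ⨅ i, (1/t) * ∫ s in (m:ℝ)..(m + t), f i s
      ≤ ⨅ i, (1/T) * ∫ s in (0:ℝ)..T, f i s := by
  set x := ⨅ m : {m : ℝ // 0 ≤ m}, ⨅ i, (1/t) * ∫ s in (m:ℝ)..(m + t), f i s
  have hnonneg (m : {m : ℝ // 0 ≤ m}) : 0 ≤ ⨅ i, (1/t) * ∫ s in (m:ℝ)..(m + t), f i s :=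
    le_ciInf fun i => (window_average_mem_Icc (hf i) (hf01 i) ht m.2).1
  have hx0 : 0 ≤ x := le_ciInf hnonneg
  refine le_ciInf fun i => ?_
  have hwin (m : ℝ) (hm : 0 ≤ m) : t * x ≤ ∫ s in m..(m + t), f i s := by
    have hbdd : BddBelow (Set.range fun j => (1/t) * ∫ s in m..(m + t), f j s) :=
      ⟨0, Set.forall_mem_range.2 fun j => (window_average_mem_Icc (hf j) (hf01 j) ht hm).1⟩
    have hx : x ≤ (1/t) * ∫ s in m..(m + t), f i s :=
      (ciInf_le ⟨0, Set.forall_mem_range.2 hnonneg⟩ ⟨m, hm⟩).trans (ciInf_le hbdd i)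
    rwa [one_div, le_inv_mul_iff₀ ht] at hx
  have hint := sub_mul_le_integral_of_le_window (fun s hs => (hf01 i s hs).1)
    (fun a b ha hab => intervalIntegrable_of_mem_Icc_zero_one (hf i) (hf01 i) ha hab)
    ht hx0 hwin hT.le
  calc (1 - t/T) * x = (1/T) * ((T - t) * x) := by field_simp
    _ ≤ (1/T) * ∫ s in (0:ℝ)..T, f i s := mul_le_mul_of_nonneg_left hint (by positivity)

end Family

theorem stmt16_general {I : Type*} [Nonempty I]
    (f : I → ℝ → ℝ) (hf : ∀ i, Measurable (f i))
    (hf01 : ∀ i s, 0 ≤ s → f i s ∈ Set.Icc (0:ℝ) 1) :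
    sSup {x : ℝ | ∃ t > (0:ℝ),
        x = ⨅ m : {m : ℝ // 0 ≤ m}, ⨅ i : I, (1/t) * ∫ s in (m:ℝ)..(m+t), f i s}
      ≤ liminf (fun t : ℝ => ⨅ i : I, (1/t) * ∫ s in (0:ℝ)..t, f i s) atTop := by
  have hv : IsCoboundedUnder (· ≥ ·) atTop fun T : ℝ => ⨅ i, (1/T) * ∫ s in (0:ℝ)..T, f i s :=
    isCoboundedUnder_ge_of_eventually_le atTop <|
      (eventually_gt_atTop 0).mono fun T hT => iInf_average_le_one hf hf01 hT
  refine csSup_le ⟨_, 1, one_pos, rfl⟩ ?_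
  rintro _ ⟨t, ht, rfl⟩
  refine Filter.Tendsto.le_liminf_of_eventuallyLE ?_
    ((eventually_gt_atTop 0).mono fun T hT => one_sub_div_mul_iInf_window_le hf hf01 ht hT) hv
  simpa using ((tendsto_const_nhds.div_atTop (tendsto_id (α := ℝ))).const_sub 1).mul_const _

theorem stmt16 {I : Type*} [Nonempty I] [LE I]
    (f : I → ℝ → ℝ) (hf : ∀ i, Measurable (f i))
    (hf01 : ∀ i s, 0 ≤ s → f i s ∈ Set.Icc (0:ℝ) 1) :
    sSup {x : ℝ | ∃ t > (0:ℝ),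
        x = ⨅ m : {m : ℝ // 0 ≤ m}, ⨅ i : I, (1/t) * ∫ s in (m:ℝ)..(m+t), f i s}
      ≤ liminf (fun t : ℝ => ⨅ i : I, (1/t) * ∫ s in (0:ℝ)..t, f i s) atTop :=
  stmt16_general f hf hf01
end
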